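/- (Orthogonal-slices exponential convergence; Remark following Theorem 4.3 of the paper, generalized form.) In the matrix FSD setup, suppose the slices are mutually orthogonal, i.e., M_iᵀ · M_j = 0 for all i ≠ j, and suppose κ = max_{0≤i≤n−1} ‖I_K − α·M_iᵀM_i‖₂ < 1. Then the error decays geometrically: E(t) ≤ κ^t · E(0) for every integer t ≥ 0. -/

import Mathlib

/-! With mutually orthogonal slices, multiplying the residual by `M_{t mod n}ᵀ` kills every term
not carrying `M_{t mod n}` itself: `M_{t mod n}ᵀ B = M_{t mod n}ᵀ M_{t mod n} X*`, and among the
delayed products `M_{(t-i) mod n} X(t-i)` only `i = 0` has slice index `t mod n`. The FSD step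
therefore collapses to the Landweber step
`X(t+1) - X* = (I - α M_{t mod n}ᵀ M_{t mod n}) (X(t) - X*)`, which contracts the Frobenius norm
by at most `κ` because `‖A E‖_F ≤ ‖A‖₂ ‖E‖_F`, column by column. -/

open Matrix Finset Filter

noncomputable def frobNorm {m k : ℕ} (A : Matrix (Fin m) (Fin k) ℝ) : ℝ :=
  Real.sqrt (∑ i, ∑ j, (A i j) ^ 2)

noncomputable def specNorm {m k : ℕ} (A : Matrix (Fin m) (Fin k) ℝ) : ℝ :=
  ‖LinearMap.toContinuousLinearMap (Matrix.toEuclideanLin A)‖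

def idx (n : ℕ) (hn : 0 < n) (a : ℤ) : Fin n :=
  ⟨(a % (n : ℤ)).toNat, by
    have h1 : (0 : ℤ) < (n : ℤ) := by exact_mod_cast hn
    have h2 := Int.emod_nonneg a h1.ne'
    have h3 := Int.emod_lt_of_pos a h1
    omega⟩

noncomputable def kappaFSD {n N K : ℕ} (hn : 0 < n) (α : ℝ)
    (M : Fin n → Matrix (Fin N) (Fin K) ℝ) : ℝ :=
  Finset.univ.sup' (Finset.univ_nonempty_iff.mpr ⟨⟨0, hn⟩⟩)
    fun i => specNorm ((1 : Matrix (Fin K) (Fin K) ℝ) - α • ((M i)ᵀ * M i))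

noncomputable def muFSD {n N K : ℕ} (hn : 2 ≤ n)
    (M : Fin n → Matrix (Fin N) (Fin K) ℝ) : ℝ :=
  ((Finset.univ : Finset (Fin n × Fin n)).filter fun p => p.1 ≠ p.2).sup'
    ⟨(⟨0, by omega⟩, ⟨1, by omega⟩), by
      refine Finset.mem_filter.mpr ⟨Finset.mem_univ _, ?_⟩
      simp [Fin.ext_iff]⟩
    fun p => specNorm ((M p.1)ᵀ * M p.2)

lemma specNorm_nonneg {m k : ℕ} (A : Matrix (Fin m) (Fin k) ℝ) : 0 ≤ specNorm A :=
  norm_nonneg _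

lemma sum_sq_mulVec_le {m k : ℕ} (C : Matrix (Fin m) (Fin k) ℝ) (v : Fin k → ℝ) :
    ∑ i, (C *ᵥ v) i ^ 2 ≤ specNorm C ^ 2 * ∑ i, v i ^ 2 := by
  have h := (LinearMap.toContinuousLinearMap (toEuclideanLin C)).le_opNorm (WithLp.toLp 2 v)
  have h2 := pow_le_pow_left₀ (norm_nonneg _) h 2
  rw [mul_pow, EuclideanSpace.real_norm_sq_eq, EuclideanSpace.real_norm_sq_eq] at h2
  simpa [specNorm] using h2

lemma frobNorm_mul_le {k m p : ℕ} (C : Matrix (Fin k) (Fin m) ℝ) (E : Matrix (Fin m) (Fin p) ℝ) :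
    frobNorm (C * E) ≤ specNorm C * frobNorm E := by
  have hcol (j : Fin p) : ∑ i, (C * E) i j ^ 2 ≤ specNorm C ^ 2 * ∑ i, E i j ^ 2 :=
    sum_sq_mulVec_le C fun i => E i j
  rw [frobNorm, frobNorm, ← Real.sqrt_sq (specNorm_nonneg C), ← Real.sqrt_mul (sq_nonneg _),
    Finset.sum_comm, Finset.sum_comm (γ := Fin m), Finset.mul_sum]
  exact Real.sqrt_le_sqrt (Finset.sum_le_sum fun j _ => hcol j)

lemma idx_sub_ne_idx {n : ℕ} (hn : 0 < n) (t : ℤ) (i : Fin n) (hi : (i : ℕ) ≠ 0) :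
    idx n hn (t - (i : ℕ)) ≠ idx n hn t := by
  intro h
  have hmod : t - (i : ℕ) ≡ t [ZMOD n] := by
    have hn' : (0 : ℤ) < n := by exact_mod_cast hn
    have := congrArg (fun x : Fin n => (x : ℤ)) h
    simpa [Int.ModEq, idx, Int.toNat_of_nonneg (Int.emod_nonneg _ hn'.ne')] using this
  have hdvd : n ∣ (i : ℕ) := by exact_mod_cast (by simpa using hmod.dvd : (n : ℤ) ∣ (i : ℕ))
  exact hi (Nat.eq_zero_of_dvd_of_lt hdvd i.isLt)

lemma specNorm_le_kappaFSD {n N K : ℕ} (hn : 0 < n) (α : ℝ) (M : Fin n → Matrix (Fin N) (Fin K) ℝ)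
    (i : Fin n) :
    specNorm (1 - α • ((M i)ᵀ * M i)) ≤ kappaFSD hn α M :=
  Finset.le_sup' (fun i => specNorm (1 - α • ((M i)ᵀ * M i))) (Finset.mem_univ i)

lemma kappaFSD_nonneg {n N K : ℕ} (hn : 0 < n) (α : ℝ) (M : Fin n → Matrix (Fin N) (Fin K) ℝ) :
    0 ≤ kappaFSD hn α M :=
  (specNorm_nonneg _).trans (specNorm_le_kappaFSD hn α M ⟨0, hn⟩)

section Orthogonal

variable {ι : Type*} [Fintype ι] {N K : ℕ} {M : ι → Matrix (Fin N) (Fin K) ℝ}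

lemma transpose_mul_sum_of_orthogonal (horth : ∀ i j, i ≠ j → (M i)ᵀ * M j = 0) (i : ι) :
    (M i)ᵀ * ∑ j, M j = (M i)ᵀ * M i := by
  rw [Matrix.mul_sum, Finset.sum_eq_single i (fun j _ hj => horth i j hj.symm) (by simp)]

end Orthogonal

section FSD

variable {n N K P : ℕ} (hn : 0 < n) {M : Fin n → Matrix (Fin N) (Fin K) ℝ}

lemma transpose_mul_delayed_sum_of_orthogonal (horth : ∀ i j, i ≠ j → (M i)ᵀ * M j = 0)
    (X : ℤ → Matrix (Fin K) (Fin P) ℝ) (t : ℤ) :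
    (M (idx n hn t))ᵀ * ∑ i : Fin n, M (idx n hn (t - (i : ℕ))) * X (t - (i : ℕ)) =
      (M (idx n hn t))ᵀ * M (idx n hn t) * X t := by
  rw [Matrix.mul_sum, Finset.sum_eq_single ⟨0, hn⟩ (fun i _ hi => ?_) (by simp)]
  · simp [Matrix.mul_assoc]
  · have hne := idx_sub_ne_idx hn t i (by simpa [Fin.ext_iff] using hi)
    rw [← Matrix.mul_assoc, horth _ _ hne.symm, Matrix.zero_mul]

lemma fsd_error_step (horth : ∀ i j, i ≠ j → (M i)ᵀ * M j = 0) (Xstar : Matrix (Fin K) (Fin P) ℝ)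
    (α : ℝ) (X : ℤ → Matrix (Fin K) (Fin P) ℝ) (R : ℤ → Matrix (Fin N) (Fin P) ℝ) (t : ℤ)
    (hR : R (t + 1) = (∑ i, M i) * Xstar -
      ∑ i : Fin n, M (idx n hn (t - (i : ℕ))) * X (t - (i : ℕ)))
    (hX : X (t + 1) = X t + α • ((M (idx n hn t))ᵀ * R (t + 1))) :
    X (t + 1) - Xstar =
      (1 - α • ((M (idx n hn t))ᵀ * M (idx n hn t))) * (X t - Xstar) := by
  rw [hX, hR, Matrix.mul_sub, ← Matrix.mul_assoc, transpose_mul_sum_of_orthogonal horth,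
    transpose_mul_delayed_sum_of_orthogonal hn horth, Matrix.sub_mul, Matrix.one_mul,
    Matrix.smul_mul, Matrix.mul_sub, Matrix.mul_assoc, Matrix.mul_assoc]
  module

end FSD

theorem fsd_orthogonal_slices_geometric_decay
    {n N K P : ℕ} (hn : 2 ≤ n)
    (M : Fin n → Matrix (Fin N) (Fin K) ℝ)
    (Xstar : Matrix (Fin K) (Fin P) ℝ)
    (B : Matrix (Fin N) (Fin P) ℝ) (hB : B = (∑ i, M i) * Xstar)
    (α : ℝ)
    (X : ℤ → Matrix (Fin K) (Fin P) ℝ) (R : ℤ → Matrix (Fin N) (Fin P) ℝ)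
    (hR : ∀ t : ℤ, 0 ≤ t →
      R (t + 1) = B - ∑ i : Fin n, M (idx n (by omega) (t - ((i : ℕ) : ℤ))) * X (t - ((i : ℕ) : ℤ)))
    (hXstep : ∀ t : ℤ, 0 ≤ t →
      X (t + 1) = X t + α • ((M (idx n (by omega) t))ᵀ * R (t + 1)))
    (horth : ∀ i j : Fin n, i ≠ j → (M i)ᵀ * M j = 0) :
    ∀ t : ℤ, 0 ≤ t →
      frobNorm (X t - Xstar) ≤
        kappaFSD (show 0 < n by omega) α M ^ t.toNat * frobNorm (X 0 - Xstar) := by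
  have hn0 : 0 < n := by omega
  have hdecay (k : ℕ) :
      frobNorm (X (k + 1) - Xstar) ≤ kappaFSD hn0 α M * frobNorm (X k - Xstar) := by
    have hk : (0 : ℤ) ≤ k := k.cast_nonneg
    rw [fsd_error_step hn0 horth Xstar α X R k (hB ▸ hR k hk) (hXstep k hk)]
    exact (frobNorm_mul_le _ _).trans
      (mul_le_mul_of_nonneg_right (specNorm_le_kappaFSD hn0 α M _) (Real.sqrt_nonneg _))
  intro t ht
  lift t to ℕ using ht
  simpa using le_geom (u := fun k : ℕ => frobNorm (X k - Xstar)) (kappaFSD_nonneg hn0 α M) t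
    fun k _ => by exact_mod_cast hdecay k
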